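/- arXiv:1704.02521 — 4 statements merged into one kernel-verified Lean document; each statement's English description precedes it below -/
import Mathlib

section
/- Fix 0<α<1 and define the sequence h_0=0, h_{i+1}=h_i+α^i, so that h_i increases to H=(1-α)^{-1}. If (X_n) is a non-negative integer-valued process adapted to a filtration F_n with |X_{n+1}-X_n| ≤ R a.s. and E[X_{n+1}-X_n | F_n] ≥ ρ > 0 on {X_n>0}, then for α sufficiently close to 1 (depending only on ρ and R), the process Y_n = h_{X_n} is a submartingale. -/
/-!
Write `h_i = ∑_{j<i} α^j = (1 - α^i)/(1 - α)`. By Bernoulli's inequality, for `|b - a| ≤ R` and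
`R (1 - α) ≤ 1/2` the increment `h_b - h_a` is at least `α^a ((b - a) - 2 R² (1 - α))`.
The factor `α^{X_n}` is `ℱ n`-measurable, so it pulls out of the conditional expectation, and on
`{X_n > 0}` the conditional increment of `h_{X_n}` is at least `α^{X_n} (ρ - 2 R² (1 - α)) ≥ 0`
as soon as `2 R² (1 - α) ≤ ρ`. On `{X_n = 0}` the increment `h_{X_{n+1}} - h_0` is nonnegative.
-/

open MeasureTheory Filter Finset

section GeomSum

variable {α : ℝ}

theorem geom_sum_add_sub_geom_sum (a k : ℕ) :
    ∑ i ∈ range (a + k), α ^ i - ∑ i ∈ range a, α ^ i = α ^ a * ∑ i ∈ range k, α ^ i := by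
  rw [sum_range_add, mul_sum]
  simp only [pow_add, add_sub_cancel_left]

theorem geom_sum_eq_one_sub_pow_div (h : α ≠ 1) (n : ℕ) :
    ∑ i ∈ range n, α ^ i = (1 - α ^ n) / (1 - α) := by
  rw [geom_sum_eq h, ← neg_div_neg_eq, neg_sub, neg_sub]

theorem abs_geom_sum_le_inv_one_sub (h0 : 0 ≤ α) (h1 : α < 1) (n : ℕ) :
    |∑ i ∈ range n, α ^ i| ≤ (1 - α)⁻¹ := by
  rw [abs_of_nonneg (sum_nonneg fun i _ => pow_nonneg h0 i), geom_sum_eq_one_sub_pow_div h1.ne,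
    ← one_div]
  gcongr
  linarith [pow_nonneg h0 n]

theorem natCast_mul_pow_le_geom_sum (h0 : 0 ≤ α) (h1 : α ≤ 1) (k : ℕ) :
    k * α ^ k ≤ ∑ i ∈ range k, α ^ i := by
  simpa using card_nsmul_le_sum (range k) (α ^ ·) (α ^ k)
    fun i hi => pow_le_pow_of_le_one h0 h1 (mem_range.1 hi).le

theorem geom_sum_le_natCast (h0 : 0 ≤ α) (h1 : α ≤ 1) (k : ℕ) : ∑ i ∈ range k, α ^ i ≤ k := by
  simpa using sum_le_card_nsmul (range k) (α ^ ·) 1 fun i _ => pow_le_one₀ h0 h1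

theorem natCast_sub_sq_mul_le_geom_sum (h0 : 0 ≤ α) (h1 : α ≤ 1) (k : ℕ) :
    k - k ^ 2 * (1 - α) ≤ ∑ i ∈ range k, α ^ i := by
  have hbern : 1 + k * (α - 1) ≤ α ^ k := one_add_mul_sub_le_pow (by linarith) k
  nlinarith [natCast_mul_pow_le_geom_sum h0 h1 k, k.cast_nonneg (α := ℝ)]

theorem geom_sum_le_pow_mul (h0 : 0 ≤ α) (h1 : α ≤ 1) {R : ℝ} (hR : R * (1 - α) ≤ 1 / 2)
    {k : ℕ} (hk : (k : ℝ) ≤ R) :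
    ∑ i ∈ range k, α ^ i ≤ α ^ k * (k + 2 * R ^ 2 * (1 - α)) := by
  have hbern : 1 + k * (α - 1) ≤ α ^ k := one_add_mul_sub_le_pow (by linarith) k
  have hk0 : (0 : ℝ) ≤ k := k.cast_nonneg
  have hkε : k * (1 - α) ≤ 1 / 2 := by nlinarith
  calc ∑ i ∈ range k, α ^ i ≤ k := geom_sum_le_natCast h0 h1 k
    _ ≤ (1 - k * (1 - α)) * (k + 2 * R ^ 2 * (1 - α)) := by
      nlinarith [mul_le_mul hk hk hk0 (hk0.trans hk), mul_nonneg (sq_nonneg R) (sub_nonneg.2 h1)]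
    _ ≤ α ^ k * (k + 2 * R ^ 2 * (1 - α)) := by
      gcongr
      linarith

theorem pow_mul_sub_le_geom_sum_sub (h0 : 0 ≤ α) (h1 : α ≤ 1) {R : ℝ} (hR : R * (1 - α) ≤ 1 / 2)
    {a b : ℕ} (hab : |(b : ℝ) - a| ≤ R) :
    α ^ a * ((b : ℝ) - a - 2 * R ^ 2 * (1 - α)) ≤
      ∑ i ∈ range b, α ^ i - ∑ i ∈ range a, α ^ i := by
  rcases le_total a b with hle | hle
  · obtain ⟨k, rfl⟩ := Nat.exists_eq_add_of_le hle
    rw [geom_sum_add_sub_geom_sum]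
    push_cast at hab ⊢
    rw [add_sub_cancel_left, abs_le] at hab
    gcongr
    nlinarith [natCast_sub_sq_mul_le_geom_sum h0 h1 k,
      mul_le_mul hab.2 hab.2 k.cast_nonneg (by linarith)]
  · obtain ⟨k, rfl⟩ := Nat.exists_eq_add_of_le hle
    rw [← neg_sub (∑ i ∈ range (b + k), α ^ i), geom_sum_add_sub_geom_sum, pow_add]
    push_cast at hab ⊢
    rw [sub_add_cancel_left, abs_neg, abs_of_nonneg k.cast_nonneg] at hab
    nlinarith [geom_sum_le_pow_mul h0 h1 hR hab, pow_nonneg h0 b]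

end GeomSum

theorem measurable_of_measurable_natCast {Ω : Type*} {m : MeasurableSpace Ω} {X : Ω → ℕ}
    (hX : Measurable fun ω => (X ω : ℝ)) : Measurable X := by
  have hfloor : Nat.floor ∘ (fun ω => (X ω : ℝ)) = X := by ext; simp
  exact hfloor ▸ Nat.measurable_floor.comp hX

theorem condExp_nonneg_of_mul_le {Ω : Type*} {m m0 : MeasurableSpace Ω} {μ : Measure Ω}
    (hm : m ≤ m0) {f φ g : Ω → ℝ} {C : ℝ} (hf : Integrable f μ) (hg : Integrable g μ)
    (hφ : StronglyMeasurable[m] φ) (hφC : ∀ ω, |φ ω| ≤ C) (hle : φ * g ≤ᵐ[μ] f)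
    (hpos : 0 ≤ᵐ[μ] φ * μ[g | m]) : 0 ≤ᵐ[μ] μ[f | m] := by
  have hφg : Integrable (φ * g) μ :=
    hg.bdd_mul (hφ.mono hm).aestronglyMeasurable (ae_of_all _ hφC)
  filter_upwards [hpos, condExp_mul_of_stronglyMeasurable_left hφ hφg hg,
    condExp_mono (m := m) hφg hf hle] with ω hpos hpull hmono
  exact hpos.trans (hpull.symm.le.trans hmono)

theorem condExp_sub_const {Ω : Type*} {m m0 : MeasurableSpace Ω} {μ : Measure Ω}
    [IsFiniteMeasure μ] (hm : m ≤ m0) {f : Ω → ℝ} (hf : Integrable f μ) (c : ℝ) :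
    μ[f - fun _ => c | m] =ᵐ[μ] μ[f | m] - fun _ => c := by
  simpa only [condExp_const hm] using condExp_sub hf (integrable_const c) m

theorem submartingale_comp_of_drift {Ω : Type*} {m0 : MeasurableSpace Ω} {μ : Measure Ω}
    [IsFiniteMeasure μ] (ℱ : Filtration ℕ m0) {f g : ℕ → ℝ} {C C' c R : ℝ}
    (hf : ∀ i, |f i| ≤ C) (hg0 : ∀ i, 0 ≤ g i) (hg1 : ∀ i, g i ≤ C') (hf0 : ∀ b, f 0 ≤ f b)
    (hfg : ∀ a b : ℕ, 0 < a → |(b : ℝ) - a| ≤ R → g a * ((b : ℝ) - a - c) ≤ f b - f a)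
    {X : ℕ → Ω → ℕ} (hX : Adapted ℱ fun n ω => (X n ω : ℝ))
    (hbdd : ∀ n, ∀ᵐ ω ∂μ, |(X (n + 1) ω : ℝ) - X n ω| ≤ R)
    (hdrift : ∀ n, ∀ᵐ ω ∂μ, 0 < X n ω →
      c ≤ μ[fun ω => (X (n + 1) ω : ℝ) - X n ω | ℱ n] ω) :
    Submartingale (fun n ω => f (X n ω)) ℱ μ := by
  have hXm (n : ℕ) : Measurable[ℱ n] (X n) := measurable_of_measurable_natCast (hX n)
  have hYint (n : ℕ) : Integrable (fun ω => f (X n ω)) μ :=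
    .of_bound (measurable_from_nat.comp ((hXm n).mono (ℱ.le n) le_rfl)).aestronglyMeasurable C
      (ae_of_all _ fun ω => hf _)
  refine submartingale_of_condExp_sub_nonneg_nat
    (fun n => (measurable_from_nat.comp (hXm n)).stronglyMeasurable) hYint fun n => ?_
  set D : Ω → ℝ := fun ω => (X (n + 1) ω : ℝ) - X n ω
  set φ : Ω → ℝ := fun ω => if 0 < X n ω then g (X n ω) else 0
  have hD : Integrable D μ := by
    have hXm0 (k : ℕ) : Measurable fun ω => (X k ω : ℝ) := (hX k).mono (ℱ.le k) le_rfl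
    exact .of_bound ((hXm0 (n + 1)).sub (hXm0 n)).aestronglyMeasurable R
      (by simpa only [Real.norm_eq_abs] using hbdd n)
  have hφ : StronglyMeasurable[ℱ n] φ :=
    (measurable_from_nat (f := fun a => if 0 < a then g a else 0)).comp (hXm n)
      |>.stronglyMeasurable
  have hφC (ω : Ω) : |φ ω| ≤ C' := by
    have hC' := (hg0 0).trans (hg1 0)
    simp only [φ]
    split_ifs
    · rw [abs_of_nonneg (hg0 _)]; exact hg1 _
    · simpa
  refine condExp_nonneg_of_mul_le (ℱ.le n) ((hYint (n + 1)).sub (hYint n))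
    (hD.sub (integrable_const c)) hφ hφC ?_ ?_
  · filter_upwards [hbdd n] with ω hω
    simp only [φ, D, Pi.mul_apply, Pi.sub_apply]
    split_ifs with h
    · exact hfg _ _ h hω
    · rw [Nat.eq_zero_of_not_pos h, zero_mul, sub_nonneg]
      exact hf0 _
  · filter_upwards [hdrift n, condExp_sub_const (ℱ.le n) hD c] with ω hdω hcω
    simp only [φ, Pi.mul_apply, Pi.zero_apply]
    rw [hcω, Pi.sub_apply]
    split_ifs with h
    · exact mul_nonneg (hg0 _) (sub_nonneg.2 (hdω h))
    · rw [zero_mul]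

/-- Change of variables: with `h_i = (1-α^i)/(1-α)` (i.e. `h_0 = 0`,
`h_{i+1} = h_i + α^i`), for `α < 1` close enough to `1` (depending only on
`ρ` and `R`), the process `Y_n = h_{X_n}` is a submartingale whenever `X` is a
non-negative integer-valued adapted process with increments bounded by `R` and
conditional drift at least `ρ > 0` on `{X_n > 0}`. -/
theorem change_of_variables_submartingale {Ω : Type*} {m0 : MeasurableSpace Ω}
    {μ : Measure Ω} [IsProbabilityMeasure μ] (ℱ : Filtration ℕ m0)
    (ρ R : ℝ) (hρ : 0 < ρ) (hR : 0 < R) :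
    ∃ α0 : ℝ, 0 ≤ α0 ∧ α0 < 1 ∧ ∀ α : ℝ, α0 < α → α < 1 →
      ∀ X : ℕ → Ω → ℕ,
        Adapted ℱ (fun n ω => (X n ω : ℝ)) →
        (∀ n, ∀ᵐ ω ∂μ, |(X (n+1) ω : ℝ) - (X n ω : ℝ)| ≤ R) →
        (∀ n, ∀ᵐ ω ∂μ, 0 < X n ω →
          ρ ≤ (μ[(fun ω' => (X (n+1) ω' : ℝ) - (X n ω' : ℝ)) | ℱ n]) ω) →
        Submartingale (fun n ω => (1 - α ^ X n ω) / (1 - α)) ℱ μ := by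
  set δ := min (1 / (2 * R)) (ρ / (2 * R ^ 2))
  have hδ : 0 < δ := lt_min (by positivity) (by positivity)
  refine ⟨max 0 (1 - δ), le_max_left _ _, max_lt one_pos (by linarith),
    fun α hα hα1 X hX hbdd hdrift => ?_⟩
  have hα0 : 0 < α := (le_max_left _ _).trans_lt hα
  have hαδ : 1 - α ≤ δ := by linarith [(le_max_right 0 (1 - δ)).trans_lt hα]
  have hRα : R * (1 - α) ≤ 1 / 2 := by
    have := (le_div_iff₀ (by positivity)).1 (hαδ.trans (min_le_left _ _))
    linarith
  have hρα : 2 * R ^ 2 * (1 - α) ≤ ρ := by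
    have := (le_div_iff₀ (by positivity)).1 (hαδ.trans (min_le_right _ _))
    linarith
  simp only [← geom_sum_eq_one_sub_pow_div hα1.ne]
  exact submartingale_comp_of_drift ℱ (C' := 1) (abs_geom_sum_le_inv_one_sub hα0.le hα1)
    (fun k => pow_nonneg hα0.le k) (fun k => pow_le_one₀ hα0.le hα1.le)
    (fun k => (sum_range_zero _).trans_le (sum_nonneg fun i _ => pow_nonneg hα0.le i))
    (fun a b _ hab => pow_mul_sub_le_geom_sum_sub hα0.le hα1.le hRα hab) hX hbdd
    (fun n => (hdrift n).mono fun ω h hpos => hρα.trans (h hpos))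
end

section
/- Let (Y_n) be a submartingale with values in [0,1] adapted to a filtration F_n, and suppose there exist 0<α<β<1 and ρ>0 such that E[Y_{n+1}-Y_n | F_n] ≥ ρ on the event {Y_n ∈ (α,β)}. Then the almost-sure limit Y of Y_n satisfies P(Y ∈ (α,β)) = 0. -/
open MeasureTheory Filter

/-! A submartingale with values in `[0,1]` has expectations bounded by `1`, while each step raises
the expectation by at least `ρ · P(Y_n ∈ (α,β))`. Hence `∑ P(Y_n ∈ (α,β)) ≤ 1/ρ`, so by
Borel–Cantelli almost every path visits the open interval `(α,β)` only finitely often, and its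
limit cannot lie in `(α,β)`. -/

theorem summable_of_mul_le_sub_of_le {a u : ℕ → ℝ} {ρ C : ℝ} (hρ : 0 < ρ) (ha : ∀ n, 0 ≤ a n)
    (hau : ∀ n, ρ * a n ≤ u (n + 1) - u n) (hu : ∀ n, u n ≤ C) : Summable a := by
  refine summable_of_sum_range_le ha (c := (C - u 0) / ρ) fun N => ?_
  rw [le_div_iff₀ hρ]
  calc (∑ i ∈ Finset.range N, a i) * ρ = ∑ i ∈ Finset.range N, ρ * a i := by
        rw [Finset.sum_mul]; simp only [mul_comm]
    _ ≤ ∑ i ∈ Finset.range N, (u (i + 1) - u i) := Finset.sum_le_sum fun i _ => hau i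
    _ = u N - u 0 := Finset.sum_range_sub u N
    _ ≤ C - u 0 := by linarith [hu N]

theorem measure_setOf_lim_mem_eq_zero {Ω α : Type*} {_ : MeasurableSpace Ω} {μ : Measure Ω}
    [TopologicalSpace α] {X : ℕ → Ω → α} {Xlim : Ω → α}
    (hconv : ∀ᵐ ω ∂μ, Tendsto (fun n => X n ω) atTop (nhds (Xlim ω))) {U : Set α}
    (hU : IsOpen U) (hvisits : ∑' n, μ {ω | X n ω ∈ U} ≠ ⊤) :
    μ {ω | Xlim ω ∈ U} = 0 := by
  refine measure_mono_null_ae ?_ (measure_limsup_atTop_eq_zero hvisits)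
  filter_upwards [hconv] with ω hω hmem
  exact mem_limsup_iff_frequently_mem.mpr (hω.eventually (hU.eventually_mem hmem)).frequently

theorem MeasureTheory.Submartingale.mul_measureReal_le_integral_sub {Ω ι : Type*}
    {m0 : MeasurableSpace Ω} {μ : Measure Ω} [IsFiniteMeasure μ] [Preorder ι]
    {ℱ : Filtration ι m0} {f : ι → Ω → ℝ}
    (hf : Submartingale f ℱ μ) {i j : ι} (hij : i ≤ j) {s : Set Ω} (hs : MeasurableSet[ℱ i] s)
    {ρ : ℝ} (hdrift : ∀ᵐ ω ∂μ, ω ∈ s → ρ ≤ (μ[f j - f i | ℱ i]) ω) :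
    ρ * μ.real s ≤ ∫ ω, f j ω ∂μ - ∫ ω, f i ω ∂μ := by
  have hind : s.indicator (fun _ => ρ) ≤ᵐ[μ] μ[f j - f i | ℱ i] := by
    filter_upwards [hf.condExp_sub_nonneg hij, hdrift] with ω hnonneg hω
    by_cases hmem : ω ∈ s
    · simpa [Set.indicator_of_mem hmem] using hω hmem
    · simpa [Set.indicator_of_notMem hmem] using hnonneg
  calc ρ * μ.real s = ∫ ω, s.indicator (fun _ => ρ) ω ∂μ := by
        rw [integral_indicator_const ρ (ℱ.le i s hs), smul_eq_mul, mul_comm]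
    _ ≤ ∫ ω, (μ[f j - f i | ℱ i]) ω ∂μ :=
        integral_mono_ae ((integrable_const ρ).indicator (ℱ.le i s hs)) integrable_condExp hind
    _ = ∫ ω, f j ω ∂μ - ∫ ω, f i ω ∂μ := by
        rw [integral_condExp (ℱ.le i)]
        exact integral_sub (hf.integrable j) (hf.integrable i)

theorem limit_avoids_drift_interval_general {Ω : Type*} {m0 : MeasurableSpace Ω}
    {μ : Measure Ω} [IsProbabilityMeasure μ] (ℱ : Filtration ℕ m0)
    (Y : ℕ → Ω → ℝ) (hsub : Submartingale Y ℱ μ)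
    (hbd : ∀ n ω, Y n ω ∈ Set.Icc (0 : ℝ) 1)
    (α β ρ : ℝ) (hρ : 0 < ρ)
    (hdrift : ∀ n, ∀ᵐ ω ∂μ, Y n ω ∈ Set.Ioo α β →
      ρ ≤ (μ[Y (n+1) - Y n | ℱ n]) ω)
    (Ylim : Ω → ℝ)
    (hconv : ∀ᵐ ω ∂μ, Tendsto (fun n => Y n ω) atTop (nhds (Ylim ω))) :
    μ {ω | Ylim ω ∈ Set.Ioo α β} = 0 := by
  have hmeas n : MeasurableSet[ℱ n] {ω | Y n ω ∈ Set.Ioo α β} :=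
    (hsub.stronglyAdapted n).measurable measurableSet_Ioo
  have hint_le_one n : ∫ ω, Y n ω ∂μ ≤ 1 :=
    (integral_mono (hsub.integrable n) (integrable_const 1) fun ω => (hbd n ω).2).trans_eq
      (by simp)
  have hsummable : Summable fun n => μ.real {ω | Y n ω ∈ Set.Ioo α β} :=
    summable_of_mul_le_sub_of_le hρ (fun _ => measureReal_nonneg)
      (fun n => hsub.mul_measureReal_le_integral_sub n.le_succ (hmeas n) (hdrift n)) hint_le_one
  refine measure_setOf_lim_mem_eq_zero hconv isOpen_Ioo ?_
  simpa only [ofReal_measureReal, ne_eq, measure_ne_top, not_false_eq_true] using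
    hsummable.tsum_ofReal_ne_top

/-- A `[0,1]`-valued submartingale with conditional drift at least `ρ > 0` on
the event `{Y_n ∈ (α,β)}` has an almost-sure limit that avoids `(α,β)`. -/
theorem limit_avoids_drift_interval {Ω : Type*} {m0 : MeasurableSpace Ω}
    {μ : Measure Ω} [IsProbabilityMeasure μ] (ℱ : Filtration ℕ m0)
    (Y : ℕ → Ω → ℝ) (hsub : Submartingale Y ℱ μ)
    (hbd : ∀ n ω, Y n ω ∈ Set.Icc (0 : ℝ) 1)
    (α β ρ : ℝ) (hα : 0 < α) (hαβ : α < β) (hβ : β < 1) (hρ : 0 < ρ)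
    (hdrift : ∀ n, ∀ᵐ ω ∂μ, Y n ω ∈ Set.Ioo α β →
      ρ ≤ (μ[Y (n+1) - Y n | ℱ n]) ω)
    (Ylim : Ω → ℝ)
    (hconv : ∀ᵐ ω ∂μ, Tendsto (fun n => Y n ω) atTop (nhds (Ylim ω))) :
    μ {ω | Ylim ω ∈ Set.Ioo α β} = 0 :=
  limit_avoids_drift_interval_general ℱ Y hsub hbd α β ρ hρ hdrift Ylim hconv
end

section
/- Let K ≥ 5 be odd, identify V_K = Z/KZ, and for an ordered pair (u,v) with dist(u,v) > 1 in the cycle graph C_K let T(u,v) be the unique neighbor w of u with dist(w,v) = dist(u,v) - 1. Fix j ∈ V_K and let D: V_K → V_K be an arbitrary map. Then (1/K!) Σ_{π ∈ S_K} #{ i ∈ V_K : dist(π(i), D(i)) > 1 and T(π(i), D(i)) = π(j) } = (K-3)/K. -/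
/-- Graph distance on the cycle `C_K` with vertices `Z/KZ`. -/
def cycleDist (K : ℕ) [NeZero K] (u v : ZMod K) : ℕ :=
  min (u - v).val (v - u).val

/-!
For `i ≠ j`, the pair `(π i, π j)` is uniformly distributed over ordered pairs of distinct
vertices: each is hit by exactly `(K - 2)!` permutations. For a fixed destination `d`, every
vertex `u` at distance at least two from `d` has exactly one next hop `w` (here oddness of `K`
is used), so there are `K - 3` pairs `(u, w)` with `w` the next hop from `u` toward `d`. Summing
over the `K - 1` indices `i ≠ j` gives `(K - 1)(K - 3)(K - 2)! = (K - 3)(K - 1)!`.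
-/

open Finset
open scoped Nat

namespace Equiv.Perm

theorem exists_apply_eq_apply_eq {α : Type*} [DecidableEq α] {i j u w : α} (hij : i ≠ j)
    (huw : u ≠ w) : ∃ τ : Perm α, τ i = u ∧ τ j = w := by
  have hj : swap i u j ≠ u := by
    rw [Ne, swap_apply_eq_iff, swap_apply_right]; exact hij.symm
  exact ⟨swap (swap i u j) w * swap i u, by simp [swap_apply_of_ne_of_ne hj.symm huw], by simp⟩

variable {α : Type*} [Fintype α] [DecidableEq α]

theorem card_filter_apply_eq_apply_eq {i j u w : α} (hij : i ≠ j) (huw : u ≠ w) :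
    #{σ : Perm α | σ i = u ∧ σ j = w} = #{σ : Perm α | σ i = i ∧ σ j = j} := by
  obtain ⟨τ, hτi, hτj⟩ := exists_apply_eq_apply_eq hij huw
  refine card_nbij' (τ⁻¹ * ·) (τ * ·) ?_ ?_ (fun σ _ => by simp) (fun σ _ => by simp)
  · intro σ hσ
    simp only [coe_filter, mem_univ, true_and, Set.mem_ofPred_eq, mul_apply] at hσ ⊢
    rw [hσ.1, hσ.2, ← hτi, ← hτj]
    simp
  · intro σ hσ
    simp_all

theorem card_filter_apply_mem {i j : α} (hij : i ≠ j) {S : Finset (α × α)}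
    (hS : ∀ p ∈ S, p.1 ≠ p.2) :
    #{σ : Perm α | (σ i, σ j) ∈ S} = #S * #{σ : Perm α | σ i = i ∧ σ j = j} := by
  rw [card_eq_sum_card_fiberwise (s := {σ : Perm α | (σ i, σ j) ∈ S})
    (f := fun σ : Perm α => (σ i, σ j)) (t := S) (fun σ hσ => (mem_filter.1 hσ).2),
    ← smul_eq_mul, ← sum_const]
  refine sum_congr rfl fun p hp => ?_
  rw [filter_filter, ← card_filter_apply_eq_apply_eq hij (hS p hp)]
  congr 1; ext σ; aesop

theorem card_filter_apply_eq_self_apply_eq_self {i j : α} (hij : i ≠ j) :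
    #{σ : Perm α | σ i = i ∧ σ j = j} = (Fintype.card α - 2)! := by
  have h := card_filter_apply_mem hij (S := univ.offDiag) (fun p hp => (mem_offDiag.1 hp).2.2)
  rw [filter_true_of_mem (fun σ _ => mem_offDiag.2 ⟨mem_univ _, mem_univ _,
    fun h => hij (σ.injective h)⟩), card_univ, Fintype.card_perm, offDiag_card, card_univ] at h
  obtain ⟨n, hn⟩ : ∃ n, Fintype.card α = n + 2 :=
    ⟨_, (Nat.sub_add_cancel (Fintype.one_lt_card_iff.2 ⟨i, j, hij⟩)).symm⟩
  rw [hn, Nat.factorial_succ, Nat.factorial_succ] at h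
  rw [hn, Nat.add_sub_cancel]
  have hpairs : (n + 2) * (n + 2) - (n + 2) = (n + 2) * (n + 1) :=
    Nat.sub_eq_of_eq_add (by ring)
  rw [hpairs] at h
  exact Nat.eq_of_mul_eq_mul_left (by positivity : 0 < (n + 2) * (n + 1)) (by rw [← h]; ring)

theorem card_filter_apply_apply {i j : α} (hij : i ≠ j) (P : α → α → Prop) [DecidableRel P]
    (hP : ∀ u w, P u w → u ≠ w) :
    #{σ : Perm α | P (σ i) (σ j)} = #{p : α × α | P p.1 p.2} * (Fintype.card α - 2)! := by
  rw [← card_filter_apply_eq_self_apply_eq_self hij]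
  simpa using card_filter_apply_mem hij (S := {p : α × α | P p.1 p.2})
    (fun p hp => hP _ _ (mem_filter.1 hp).2)

end Equiv.Perm

section

variable {K : ℕ} [NeZero K]

theorem cycleDist_comm (u v : ZMod K) : cycleDist K u v = cycleDist K v u :=
  min_comm _ _

theorem cycleDist_eq_min_val (u v : ZMod K) :
    cycleDist K u v = min (u - v).val (K - (u - v).val) := by
  rw [cycleDist, ← neg_sub u v, ZMod.neg_val]
  split_ifs with h
  · rw [h, ZMod.val_zero]; simp
  · rfl

theorem cycleDist_eq_zero_iff {u v : ZMod K} : cycleDist K u v = 0 ↔ u = v := by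
  rw [cycleDist_eq_min_val, ← sub_eq_zero (a := u), ← ZMod.val_eq_zero]
  have := (u - v).val_lt
  omega

theorem cycleDist_self (u : ZMod K) : cycleDist K u u = 0 :=
  cycleDist_eq_zero_iff.2 rfl

theorem cycleDist_eq_one_iff (hK : 1 < K) {u v : ZMod K} :
    cycleDist K u v = 1 ↔ u = v + 1 ∨ u = v - 1 := by
  have : Fact (1 < K) := ⟨hK⟩
  have hval_one : (1 : ZMod K).val = 1 := ZMod.val_one K
  have hval_neg_one : (-1 : ZMod K).val = K - 1 := by simp [ZMod.neg_val, hval_one]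
  have hplus : u = v + 1 ↔ (u - v).val = 1 := by
    rw [← hval_one, (ZMod.val_injective K).eq_iff, sub_eq_iff_eq_add']
  have hminus : u = v - 1 ↔ (u - v).val = K - 1 := by
    rw [← hval_neg_one, (ZMod.val_injective K).eq_iff, sub_eq_iff_eq_add', ← sub_eq_add_neg]
  rw [cycleDist_eq_min_val, hplus, hminus]
  have := (u - v).val_lt
  omega

end

/-- `w` is the paper's `T(u, d)`. -/
def IsNextHop (K : ℕ) [NeZero K] (u d w : ZMod K) : Prop :=
  1 < cycleDist K u d ∧ cycleDist K u w = 1 ∧ cycleDist K w d = cycleDist K u d - 1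

instance (K : ℕ) [NeZero K] (u d w : ZMod K) : Decidable (IsNextHop K u d w) :=
  inferInstanceAs (Decidable (_ ∧ _ ∧ _))

/-- Step toward `d` the shorter way round; for odd `K` there is never a tie. -/
def nextHop (K : ℕ) [NeZero K] (u d : ZMod K) : ZMod K :=
  if 2 * (u - d).val < K then u - 1 else u + 1

section

variable {K : ℕ} [NeZero K]

theorem IsNextHop.ne {u d w : ZMod K} (h : IsNextHop K u d w) : u ≠ w := by
  rintro rfl
  simpa [cycleDist_self] using h.2.1

theorem isNextHop_iff (hodd : Odd K) {u d w : ZMod K} (h : 1 < cycleDist K u d) :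
    IsNextHop K u d w ↔ w = nextHop K u d := by
  obtain ⟨k, hk⟩ := hodd
  set m := (u - d).val
  have hmK : m < K := ZMod.val_lt _
  have hdist : cycleDist K u d = min m (K - m) := cycleDist_eq_min_val u d
  rw [hdist] at h
  have : Fact (1 < K) := ⟨by omega⟩
  have hsucc : cycleDist K (u + 1) d = min (m + 1) (K - (m + 1)) := by
    have hval : (u - d + 1).val = m + 1 := by
      rw [ZMod.val_add_of_lt (by rw [ZMod.val_one]; omega), ZMod.val_one]
    rw [cycleDist_eq_min_val, add_sub_right_comm, hval]
  have hpred : cycleDist K (u - 1) d = min (m - 1) (K - (m - 1)) := by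
    have hval : (u - d - 1).val = m - 1 := by
      rw [ZMod.val_sub (by rw [ZMod.val_one]; omega), ZMod.val_one]
    rw [cycleDist_eq_min_val, sub_right_comm, hval]
  have hneighbour : cycleDist K u w = 1 ↔ w = u + 1 ∨ w = u - 1 := by
    rw [cycleDist_comm, cycleDist_eq_one_iff Fact.out]
  unfold IsNextHop nextHop
  rw [hneighbour, hdist]
  split_ifs with h2m
  · constructor
    · rintro ⟨-, rfl | rfl, hw⟩ <;> [rw [hsucc] at hw; rfl]
      omega
    · rintro rfl
      exact ⟨h, Or.inr rfl, by rw [hpred]; omega⟩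
  · constructor
    · rintro ⟨-, rfl | rfl, hw⟩ <;> [rfl; rw [hpred] at hw]
      omega
    · rintro rfl
      exact ⟨h, Or.inl rfl, by rw [hsucc]; omega⟩

theorem card_filter_isNextHop (hodd : Odd K) (d : ZMod K) :
    #{p : ZMod K × ZMod K | IsNextHop K p.1 d p.2} = #{u : ZMod K | 1 < cycleDist K u d} := by
  refine card_nbij' Prod.fst (fun u => (u, nextHop K u d)) ?_ ?_ ?_ (fun u _ => rfl)
  · intro p hp
    simpa using (mem_filter.1 hp).2.1
  · intro u hu
    simpa using (isNextHop_iff hodd (mem_filter.1 hu).2).2 rfl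
  · intro p hp
    have hp : IsNextHop K p.1 d p.2 := (mem_filter.1 hp).2
    simp [← (isNextHop_iff hodd hp.1).1 hp]

theorem card_filter_one_lt_cycleDist (hK : 3 ≤ K) (d : ZMod K) :
    #{u : ZMod K | 1 < cycleDist K u d} = K - 3 := by
  have hnear : ({u | ¬1 < cycleDist K u d} : Finset (ZMod K)) = {d, d + 1, d - 1} := by
    ext u
    simp only [mem_filter, mem_univ, true_and, mem_insert, mem_singleton, not_lt,
      Nat.le_one_iff_eq_zero_or_eq_one, cycleDist_eq_zero_iff,
      cycleDist_eq_one_iff (K := K) (by omega)]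
  have : Fact (1 < K) := ⟨by omega⟩
  have h2 : (2 : ZMod K) ≠ 0 := by
    intro h
    have := congrArg ZMod.val h
    rw [ZMod.val_ofNat_of_lt (show 2 < K by omega), ZMod.val_zero] at this
    norm_num at this
  have hcard : #({d, d + 1, d - 1} : Finset (ZMod K)) = 3 :=
    card_eq_three.2 ⟨d, d + 1, d - 1,
      fun h => one_ne_zero (by linear_combination -h), fun h => one_ne_zero (by linear_combination h),
      fun h => h2 (by linear_combination h), rfl⟩
  have := card_filter_add_card_filter_not (s := univ) (fun u : ZMod K => 1 < cycleDist K u d)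
  rw [hnear, hcard, card_univ, ZMod.card] at this
  omega

end

/-- Lemma 5 (cycle): for odd `K ≥ 5`, a fixed `j` and an arbitrary destination
map `D`, the average over uniform permutations `π` of the number of `i` with
`dist(π(i),D(i)) > 1` whose (unique) next hop from `π(i)` toward `D(i)` is
`π(j)` equals `(K-3)/K`. -/
theorem cycle_transit_rate (K : ℕ) [NeZero K] (hK : 5 ≤ K) (hodd : Odd K)
    (j : ZMod K) (D : ZMod K → ZMod K) :
    (∑ π : Equiv.Perm (ZMod K),
      ((Finset.univ.filter (fun i : ZMod K =>
        1 < cycleDist K (π i) (D i) ∧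
        cycleDist K (π i) (π j) = 1 ∧
        cycleDist K (π j) (D i) = cycleDist K (π i) (D i) - 1)).card : ℚ)) /
      (Nat.factorial K : ℚ) = ((K : ℚ) - 3) / (K : ℚ) := by
  have hcount (i : ZMod K) : #{π : Equiv.Perm (ZMod K) | IsNextHop K (π i) (D i) (π j)} =
      if i = j then 0 else (K - 3) * (K - 2)! := by
    split_ifs with hij
    · subst hij
      exact card_eq_zero.2 (filter_eq_empty_iff.2 fun π _ h => h.ne rfl)
    · rw [Equiv.Perm.card_filter_apply_apply hij (fun u w => IsNextHop K u (D i) w)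
        fun _ _ h => h.ne, card_filter_isNextHop hodd, card_filter_one_lt_cycleDist (by omega),
        ZMod.card]
  have hsum : ∑ π : Equiv.Perm (ZMod K), #{i | IsNextHop K (π i) (D i) (π j)} =
      (K - 1) * ((K - 3) * (K - 2)!) := by
    simp only [card_filter]
    rw [sum_comm]
    simp only [← card_filter, hcount]
    simp [sum_ite, filter_ne', ZMod.card]
  change (∑ π : Equiv.Perm (ZMod K), (#{i | IsNextHop K (π i) (D i) (π j)} : ℚ)) / _ = _
  have hfact : K ! = K * ((K - 1) * (K - 2)!) := by
    rw [← Nat.mul_factorial_pred (by omega), ← Nat.mul_factorial_pred (n := K - 1) (by omega),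
      Nat.sub_sub]
  have hK1 : ((K - 1 : ℕ) : ℚ) ≠ 0 := by exact_mod_cast (by omega : K - 1 ≠ 0)
  rw [← Nat.cast_sum, hsum, hfact]
  push_cast [Nat.cast_sub (by omega : 3 ≤ K)]
  field_simp
end

section
/- Let β > 0 and 0 < γ < 1, and let (Z_t) be the continuous-time Markov chain on {0,1,2,...} ∪ {*} with rates q(n,n+1)=β and q(n,n-1)=β+γ for n>1, q(1,2)=β, q(1,0)=β, q(1,*)=γ, q(0,1)=2β, q(0,*)=γ, where * is absorbing. Let T(n) denote the expected time to absorption starting from n. Then T(n) = (1/γ)(n + (β/γ)·(2β+γ)/(3β+γ)) for all n ≥ 1, and T(0) = 1/γ + (2β²)/(γ²(3β+γ)); moreover this is the unique solution of the harmonic equations that grows at most linearly in n. -/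
set_option maxHeartbeats 1000000 in
/-- Mean absorption time of the birth-death chain with rates
`q(n,n+1)=β`, `q(n,n-1)=β+γ` for `n>1`, `q(1,2)=β`, `q(1,0)=β`, `q(1,*)=γ`,
`q(0,1)=2β`, `q(0,*)=γ`: the explicit formula solves the harmonic equations,
and it is the unique at-most-linearly-growing solution. -/
theorem absorption_time_formula (β γ : ℝ) (hβ : 0 < β) (hγ : 0 < γ) (hγ1 : γ < 1) :
    (∀ T : ℕ → ℝ,
      (∀ n : ℕ, 1 < n →
        T n = 1 / (2*β+γ) + (β/(2*β+γ)) * T (n+1) + ((β+γ)/(2*β+γ)) * T (n-1)) →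
      (T 1 = 1 / (2*β+γ) + (β/(2*β+γ)) * T 2 + (β/(2*β+γ)) * T 0) →
      (T 0 = 1 / (2*β+γ) + (2*β/(2*β+γ)) * T 1) →
      (∃ C : ℝ, ∀ n : ℕ, |T n| ≤ C * (n + 1)) →
      ((∀ n : ℕ, 1 ≤ n → T n = (1/γ) * (n + (β/γ) * (2*β+γ)/(3*β+γ))) ∧
        T 0 = 1/γ + (2*β^2)/(γ^2 * (3*β+γ)))) ∧
    (∃ T : ℕ → ℝ,
      (∀ n : ℕ, 1 < n →
        T n = 1 / (2*β+γ) + (β/(2*β+γ)) * T (n+1) + ((β+γ)/(2*β+γ)) * T (n-1)) ∧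
      (T 1 = 1 / (2*β+γ) + (β/(2*β+γ)) * T 2 + (β/(2*β+γ)) * T 0) ∧
      (T 0 = 1 / (2*β+γ) + (2*β/(2*β+γ)) * T 1) ∧
      (∃ C : ℝ, ∀ n : ℕ, |T n| ≤ C * (n + 1)) ∧
      (∀ n : ℕ, 1 ≤ n → T n = (1/γ) * (n + (β/γ) * (2*β+γ)/(3*β+γ))) ∧
      T 0 = 1/γ + (2*β^2)/(γ^2 * (3*β+γ))) := by
  have hγ' : γ ≠ 0 := ne_of_gt hγ
  have h2 : (0:ℝ) < 2*β+γ := by linarith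
  have h2' : (2*β+γ) ≠ 0 := ne_of_gt h2
  have h3 : (0:ℝ) < 3*β+γ := by linarith
  have h3' : (3*β+γ) ≠ 0 := ne_of_gt h3
  constructor
  · rintro T hrec h1 h0 ⟨C, hC⟩
    have h1' : (2*β+γ) * T 1 = 1 + β * T 2 + β * T 0 := by
      rw [h1]; field_simp
    have h0' : (2*β+γ) * T 0 = 1 + 2*β * T 1 := by
      rw [h0]; field_simp
    have key : ∀ n : ℕ, β^n * (γ * (T (n+2) - T (n+1)) - 1)
        = (β+γ)^n * (γ * (T 2 - T 1) - 1) := by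
      intro n
      induction n with
      | zero => simp
      | succ k ih =>
        have h := hrec (k+2) (by omega)
        have hk : (k+2) - 1 = k+1 := rfl
        rw [hk] at h
        have h' : (2*β+γ) * T (k+2) = 1 + β * T (k+3) + (β+γ) * T (k+1) := by
          rw [h]; field_simp
        have hstep : β * (γ * (T (k+3) - T (k+2)) - 1)
            = (β+γ) * (γ * (T (k+2) - T (k+1)) - 1) := by
          linear_combination (-γ) * h'
        show β^(k+1) * (γ * (T (k+3) - T (k+2)) - 1)
            = (β+γ)^(k+1) * (γ * (T 2 - T 1) - 1)
        calc β^(k+1) * (γ * (T (k+3) - T (k+2)) - 1)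
            = β^k * (β * (γ * (T (k+3) - T (k+2)) - 1)) := by ring
          _ = β^k * ((β+γ) * (γ * (T (k+2) - T (k+1)) - 1)) := by rw [hstep]
          _ = (β+γ) * (β^k * (γ * (T (k+2) - T (k+1)) - 1)) := by ring
          _ = (β+γ) * ((β+γ)^k * (γ * (T 2 - T 1) - 1)) := by rw [ih]
          _ = (β+γ)^(k+1) * (γ * (T 2 - T 1) - 1) := by ring
    have hC0 : 0 ≤ C := le_trans (abs_nonneg (T 0)) (by simpa using hC 0)
    set K : ℝ := 2*γ*C + 1 with hK
    have hKpos : 0 < K := by positivity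
    have hd0 : γ * (T 2 - T 1) - 1 = 0 := by
      by_contra hne
      set D : ℝ := |γ * (T 2 - T 1) - 1| with hD
      have hd0pos : 0 < D := abs_pos.mpr hne
      set ε : ℝ := γ/β with hε
      have hεpos : 0 < ε := div_pos hγ hβ
      have hbound : ∀ m : ℕ, D * (ε * m)^2 ≤ K * (2*(m:ℝ)+3) := by
        intro m
        have hb1 : (1 + (m:ℝ)*ε) ≤ (1+ε)^m := one_add_mul_le_pow (by linarith) m
        have hb2 : (ε*(m:ℝ))^2 ≤ ((1+ε)^m)^2 := by
          have hm0 : (0:ℝ) ≤ ε * m := by positivity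
          nlinarith [hb1, hm0]
        have hkey := key (2*m)
        have t1 : |T (2*m+2)| ≤ C * (2*(m:ℝ)+3) := by
          have := hC (2*m+2); push_cast at this; linarith
        have t2 : |T (2*m+1)| ≤ C * (2*(m:ℝ)+2) := by
          have := hC (2*m+1); push_cast at this; linarith
        have e1 : |γ * (T (2*m+2) - T (2*m+1)) - 1|
            ≤ γ * (|T (2*m+2)| + |T (2*m+1)|) + 1 := by
          calc |γ * (T (2*m+2) - T (2*m+1)) - 1|
              ≤ |γ * (T (2*m+2) - T (2*m+1))| + |(1:ℝ)| := abs_sub _ _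
            _ = γ * |T (2*m+2) - T (2*m+1)| + 1 := by
                rw [abs_mul, abs_of_pos hγ, abs_one]
            _ ≤ γ * (|T (2*m+2)| + |T (2*m+1)|) + 1 := by
                have h := abs_sub (T (2*m+2)) (T (2*m+1))
                nlinarith [h]
        have u1 := mul_le_mul_of_nonneg_left t1 hγ.le
        have u2 := mul_le_mul_of_nonneg_left t2 hγ.le
        have hdb : |γ * (T (2*m+2) - T (2*m+1)) - 1| ≤ K * (2*(m:ℝ)+3) := by
          rw [hK]
          have hm0 : (0:ℝ) ≤ (m:ℝ) := Nat.cast_nonneg m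
          have hgc : (0:ℝ) ≤ γ * C := mul_nonneg hγ.le hC0
          nlinarith [e1, u1, u2, hm0, hgc]
        have hpow : (β+γ)^(2*m) = β^(2*m) * (1+ε)^(2*m) := by
          rw [← mul_pow]
          congr 1
          rw [hε]
          field_simp
        have hbpow : (0:ℝ) < β^(2*m) := pow_pos hβ _
        have habs : β^(2*m) * |γ * (T (2*m+2) - T (2*m+1)) - 1|
            = β^(2*m) * ((1+ε)^(2*m) * D) := by
          have hc := congrArg abs hkey
          rw [abs_mul, abs_mul, abs_pow, abs_pow, abs_of_pos hβ,
            abs_of_pos (by linarith : (0:ℝ) < β+γ)] at hc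
          rw [hc, hpow, hD]; ring
        have heq : |γ * (T (2*m+2) - T (2*m+1)) - 1| = (1+ε)^(2*m) * D :=
          mul_left_cancel₀ (ne_of_gt hbpow) habs
        have h2m : ((1+ε)^m)^2 = (1+ε)^(2*m) := by
          rw [← pow_mul, mul_comm]
        calc D * (ε * m)^2 ≤ D * ((1+ε)^(2*m)) := by
              rw [← h2m]
              exact mul_le_mul_of_nonneg_left hb2 hd0pos.le
          _ = |γ * (T (2*m+2) - T (2*m+1)) - 1| := by rw [heq]; ring
          _ ≤ K * (2*(m:ℝ)+3) := hdb
      obtain ⟨m0, hm0⟩ := exists_nat_gt (5*K/(D*ε^2))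
      set x : ℝ := (m0:ℝ) + 1 with hx
      have hm0n : (0:ℝ) ≤ (m0:ℝ) := Nat.cast_nonneg m0
      have hx1 : (1:ℝ) ≤ x := by rw [hx]; linarith
      have hxpos : (0:ℝ) < x := by linarith
      have hmlt : 5*K/(D*ε^2) < x := by rw [hx]; linarith
      have hden : 0 < D*ε^2 := by positivity
      have h5K : 5*K < x*(D*ε^2) := (div_lt_iff₀ hden).mp hmlt
      have hb := hbound (m0+1)
      push_cast at hb
      have hb' : D * (ε * x)^2 ≤ K * (2*x+3) := by rw [hx]; convert hb using 3 <;> push_cast <;> ring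
      have c1 : K * (2*x+3) ≤ K * (5*x) :=
        mul_le_mul_of_nonneg_left (by linarith) hKpos.le
      have c2 : 5*K*x < (x*(D*ε^2))*x := mul_lt_mul_of_pos_right h5K hxpos
      have c3 : D * (ε * x)^2 = (x*(D*ε^2))*x := by ring
      linarith [hb', c1, c2, c3.le, c3.ge]
    have hdall : ∀ n : ℕ, γ * (T (n+2) - T (n+1)) - 1 = 0 := by
      intro n
      have hkn := key n
      rw [hd0, mul_zero] at hkn
      rcases mul_eq_zero.mp hkn with h | h
      · exact absurd h (pow_ne_zero n hβ.ne')
      · exact h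
    have hsucc : ∀ n : ℕ, T (n+2) = T (n+1) + 1/γ := by
      intro n
      have hdn := hdall n
      field_simp
      nlinarith [hdn]
    have hlin : ∀ n : ℕ, T (n+1) = T 1 + n * (1/γ) := by
      intro n
      induction n with
      | zero => simp
      | succ k ih =>
        show T (k+2) = T 1 + ((k:ℕ)+1 : ℕ) * (1/γ)
        rw [hsucc k, ih]
        push_cast
        ring
    have hC2 : γ * T 2 - γ * T 1 = 1 := by linarith [hd0]
    have hT1 : T 1 = (2*β^2+4*β*γ+γ^2)/(γ^2*(3*β+γ)) := by
      rw [eq_div_iff (by positivity)]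
      linear_combination ((2*β+γ)*γ) * h1' + (β*γ) * h0' + (β*(2*β+γ)) * hC2
    have hT0 : T 0 = 1/γ + 2*β^2/(γ^2*(3*β+γ)) := by
      rw [h0, hT1]; field_simp; ring
    refine ⟨?_, hT0⟩
    intro n hn
    obtain ⟨m, rfl⟩ : ∃ m, n = m + 1 := ⟨n-1, by omega⟩
    rw [hlin m, hT1]
    push_cast
    field_simp
    ring
  · refine ⟨fun n => if n = 0 then 1/γ + 2*β^2/(γ^2*(3*β+γ))
      else (1/γ) * (n + (β/γ) * (2*β+γ)/(3*β+γ)), ?_, ?_, ?_, ?_, ?_, ?_⟩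
    · intro n hn
      have e0 : n ≠ 0 := by omega
      have e1 : n + 1 ≠ 0 := by omega
      have e2 : n - 1 ≠ 0 := by omega
      simp only [e0, e1, e2, if_false]
      have hc : ((n - 1 : ℕ) : ℝ) = (n:ℝ) - 1 := by
        rw [Nat.cast_sub (by omega)]; norm_num
      rw [hc]
      push_cast
      field_simp
      ring
    · norm_num
      field_simp
      ring
    · norm_num
      field_simp
      ring
    · refine ⟨(1/γ + 2*β^2/(γ^2*(3*β+γ))) + (1/γ) * (1 + (β/γ) * (2*β+γ)/(3*β+γ)), ?_⟩
      intro n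
      have ha : (0:ℝ) ≤ (β/γ) * (2*β+γ)/(3*β+γ) := by positivity
      have ht0 : (0:ℝ) ≤ 1/γ + 2*β^2/(γ^2*(3*β+γ)) := by positivity
      have hb0 : (0:ℝ) ≤ (1/γ) * (1 + (β/γ) * (2*β+γ)/(3*β+γ)) := by positivity
      cases n with
      | zero =>
        simp only [if_pos]
        rw [abs_of_nonneg ht0]
        push_cast
        nlinarith [ha, hγ, ht0, hb0]
      | succ m =>
        simp only [Nat.succ_ne_zero, if_false]
        have hm : (0:ℝ) ≤ (m:ℝ) := Nat.cast_nonneg m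
        have hpos : (0:ℝ) ≤ (1/γ) * (((m+1:ℕ):ℝ) + (β/γ) * (2*β+γ)/(3*β+γ)) := by
          positivity
        rw [abs_of_nonneg hpos]
        push_cast
        have hinvγ : (0:ℝ) < 1/γ := by positivity
        nlinarith [ha, ht0, hm, hinvγ, mul_nonneg ha hm, mul_nonneg ht0 hm,
          mul_nonneg hinvγ.le (mul_nonneg ha hm), mul_nonneg hinvγ.le ha]
    · intro n hn
      have e0 : n ≠ 0 := by omega
      simp only [e0, if_false]
    · simp
end
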